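/- Block-matrix encoding identity: let T', B, A be matrices over a field such that φ := −T'·B is invertible, and set p₁ᵗ = φ⁻¹·(T'·A)·sᵗ and p₂ᵗ = −B·p₁ᵗ − A·sᵗ; then the vector x = (p₂, p₁, s) satisfies H·xᵗ = 0 for the matrix H = [[T', 0, 0], [I, B, A]]. -/

import Mathlib

open Matrix

/-- Richardson–Urbanke efficient encoding: for a parity-check matrix in approximate lower
triangular form `H = [[T', 0, 0], [I, B, A]]` over a field, with `φ = −T'·B` invertible,
setting `p₁ = φ⁻¹·(T'·A)·s` and `p₂ = −B·p₁ − A·s` yields `H·(p₂, p₁, s)ᵗ = 0` for every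
vector `s`. -/
theorem stmt_19 (t g s : ℕ) (F : Type*) [Field F]
    (T' : Matrix (Fin g) (Fin t) F) (B : Matrix (Fin t) (Fin g) F)
    (A : Matrix (Fin t) (Fin s) F) (sv : Fin s → F)
    (hφ : IsUnit (-(T' * B)).det) :
    let φ : Matrix (Fin g) (Fin g) F := -(T' * B)
    let p₁ : Fin g → F := (φ⁻¹ * (T' * A)).mulVec sv
    let p₂ : Fin t → F := -(B.mulVec p₁) - A.mulVec sv
    let H : Matrix (Fin g ⊕ Fin t) (Fin t ⊕ (Fin g ⊕ Fin s)) F :=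
      Matrix.fromBlocks T' 0 1 (Matrix.fromCols B A)
    H.mulVec (Sum.elim p₂ (Sum.elim p₁ sv)) = 0 := by
  intro φ p₁ p₂ H
  have hcancel : φ * φ⁻¹ = 1 := mul_nonsing_inv _ hφ
  rw [show H = Matrix.fromBlocks T' 0 1 (Matrix.fromCols B A) from rfl,
    Matrix.fromBlocks_mulVec, Sum.elim_comp_inl, Sum.elim_comp_inr,
    Matrix.fromCols_mulVec_sumElim]
  have h1 : T'.mulVec p₂ + (0 : Matrix (Fin g) (Fin g ⊕ Fin s) F).mulVec (Sum.elim p₁ sv) = 0 := by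
    have : T'.mulVec p₂ = φ.mulVec p₁ - T'.mulVec (A.mulVec sv) := by
      simp only [p₂, φ, Matrix.mulVec_sub, Matrix.mulVec_neg, Matrix.neg_mulVec,
        Matrix.mulVec_mulVec, Matrix.neg_mul]
    rw [Matrix.zero_mulVec, add_zero, this]
    have : φ.mulVec p₁ = T'.mulVec (A.mulVec sv) := by
      simp only [p₁, Matrix.mulVec_mulVec, ← Matrix.mul_assoc, hcancel, Matrix.one_mul]
    rw [this, sub_self]
  have h2 : (1 : Matrix (Fin t) (Fin t) F).mulVec p₂ + (B.mulVec p₁ + A.mulVec sv) = 0 := by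
    rw [Matrix.one_mulVec]
    show -(B.mulVec p₁) - A.mulVec sv + (B.mulVec p₁ + A.mulVec sv) = 0
    abel
  rw [h1, h2]
  ext (i | i) <;> simp
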